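/- arXiv:1912.04445 — 2 statements merged into one kernel-verified Lean document; each statement's English description precedes it below -/
import Mathlib

section
/- For all natural numbers n and m, the cylindrical board (8+2n)′×(5+2m) admits a fault-free domino tiling. -/
/-- Adjacency on the cylindrical board `a′ × b` (height `a`, circumference `b`):
cells `(i,j)` and `(i+1,j)` (vertical neighbors) or `(i,j)` and `(i,j+1)` with
addition in `ZMod b` (horizontal neighbors, wrapping around). -/
def cylAdj (a b : ℕ) (c d : Fin a × ZMod b) : Prop :=
  (c.2 = d.2 ∧ ((c.1 : ℕ) + 1 = (d.1 : ℕ) ∨ (d.1 : ℕ) + 1 = (c.1 : ℕ))) ∨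
  (c.1 = d.1 ∧ (d.2 = c.2 + 1 ∨ c.2 = d.2 + 1))

/-- A tiling of the cylindrical board: a set of dominoes (unordered pairs of
adjacent cells) such that every cell belongs to exactly one domino. -/
def cylIsTiling (a b : ℕ) (T : Set (Sym2 (Fin a × ZMod b))) : Prop :=
  (∀ p ∈ T, ∃ c d, cylAdj a b c d ∧ p = s(c, d)) ∧
  (∀ x : Fin a × ZMod b, ∃! p, p ∈ T ∧ x ∈ p)

/-- A tiling of the cylindrical board is fault-free if every horizontal fault-line
(between rows `i` and `i+1`, for `i + 1 < a`) and every vertical fault-line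
(between columns `j` and `j+1`, for `j : ZMod b`) is crossed by some domino. -/
def cylFaultFree (a b : ℕ) (T : Set (Sym2 (Fin a × ZMod b))) : Prop :=
  (∀ i : ℕ, i + 1 < a → ∃ c d : Fin a × ZMod b,
      s(c, d) ∈ T ∧ c.2 = d.2 ∧ (c.1 : ℕ) = i ∧ (d.1 : ℕ) = i + 1) ∧
  (∀ j : ZMod b, ∃ i : Fin a, s((i, j), (i, j + 1)) ∈ T)

/-- The cylindrical board `a′ × b` admits a fault-free domino tiling. -/
def cylFaultFreeTileable (a b : ℕ) : Prop :=
  ∃ T : Set (Sym2 (Fin a × ZMod b)), cylIsTiling a b T ∧ cylFaultFree a b T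

/-!
The vertical dominoes are laid out in consecutive column blocks running around the cylinder:
between rows `i` and `i + 1` there is one vertical domino when `i` is even and two when `i` is
odd, in the columns from `⌊3i/2⌋` on, so every line between two rows is crossed. In each row the
vertically covered cells form an arc of odd length (1 in the first and last row, which needs the
height to be even, and 3 in the others), so for odd circumference the rest of the row is an arc
of even length, tiled by horizontal dominoes from its start. The horizontal dominoes of rows 0
and 2 cross every vertical line except those after columns 0 and 2; these are crossed in rows 4
and 5 when `b ≥ 7`, and in rows 6 and 7 when `b = 5`.
-/

namespace ZMod

variable {b : ℕ}

lemma val_add_one_of_lt (x : ZMod b) (h : x.val + 1 < b) : (x + 1).val = x.val + 1 := by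
  have h1 : (1 : ZMod b).val = 1 := val_one'' (by omega)
  rw [val_add_of_lt (by omega), h1]

lemma val_sub_natCast_of_le [NeZero b] (x : ZMod b) {m : ℕ} (h : m ≤ x.val) :
    (x - m).val = x.val - m := by
  rw [val_sub (by rwa [val_cast_of_lt (h.trans_lt x.val_lt)]),
    val_cast_of_lt (h.trans_lt x.val_lt)]

lemma val_sub_natCast_of_lt (x : ZMod b) {m : ℕ} (h : x.val < m) (hm : m ≤ b) :
    (x - m).val = x.val + (b - m) := by
  have hx : x - m = x + ((b - m : ℕ) : ZMod b) := by
    rw [Nat.cast_sub hm, natCast_self]; ring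
  rw [hx, val_add_of_lt] <;> rw [val_cast_of_lt (by omega)]
  omega

end ZMod

lemma cylIsTiling_range_of_involutive {a b : ℕ} {f : Fin a × ZMod b → Fin a × ZMod b}
    (hf : Function.Involutive f) (hadj : ∀ x, cylAdj a b x (f x)) :
    cylIsTiling a b (Set.range fun x => s(x, f x)) := by
  refine ⟨?_, fun x => ⟨s(x, f x), ⟨⟨x, rfl⟩, Sym2.mem_mk_left _ _⟩, ?_⟩⟩
  · rintro _ ⟨x, rfl⟩
    exact ⟨x, f x, hadj x, rfl⟩
  · rintro _ ⟨⟨y, rfl⟩, hy⟩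
    rcases Sym2.mem_iff.mp hy with rfl | rfl
    · rfl
    · rw [hf y, Sym2.eq_swap]

section Arc

variable {b : ℕ}

/-- The `n` consecutive cells `s, s + 1, …, s + (n - 1)` of the cycle `ZMod b`. -/
def arc (s : ZMod b) (n : ℕ) : Set (ZMod b) := {j | (j - s).val < n}

lemma mem_arc {s j : ZMod b} {n : ℕ} : j ∈ arc s n ↔ (j - s).val < n := Iff.rfl

lemma arc_union_arc [NeZero b] (s : ZMod b) (m n : ℕ) :
    arc s m ∪ arc (s + m) n = arc s (m + n) := by
  ext j
  simp only [Set.mem_union, mem_arc, ← sub_sub]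
  by_cases h : m ≤ (j - s).val
  · rw [ZMod.val_sub_natCast_of_le _ h]; omega
  · omega

lemma disjoint_arc_arc (s : ZMod b) {m n : ℕ} (h : m + n ≤ b) :
    Disjoint (arc s m) (arc (s + m) n) := by
  rw [Set.disjoint_left]
  intro j hm hn
  rw [mem_arc, ← sub_sub, ZMod.val_sub_natCast_of_lt _ hm (by omega)] at hn
  omega

/-- The partner of `j` when the cycle, read from `s`, is cut into consecutive pairs. -/
def pairFrom (s j : ZMod b) : ZMod b := if Odd (j - s).val then j + 1 else j - 1

lemma pairFrom_pairFrom (hb : Odd b) {s j : ZMod b} (hj : j ≠ s) :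
    pairFrom s (pairFrom s j) = j := by
  have : NeZero b := ⟨hb.pos.ne'⟩
  have hb2 := Nat.odd_iff.mp hb
  have hd : (j - s).val ≠ 0 := by rwa [ne_eq, ZMod.val_eq_zero, sub_eq_zero]
  unfold pairFrom
  by_cases hodd : Odd (j - s).val
  · have hlt : (j - s).val + 1 < b := by
      have := (j - s).val_lt; rw [Nat.odd_iff] at hodd; omega
    have hval : (j + 1 - s).val = (j - s).val + 1 := by
      rw [add_sub_right_comm, ZMod.val_add_one_of_lt _ hlt]
    rw [if_pos hodd, if_neg (by rw [hval, Nat.odd_add_one, not_not]; exact hodd),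
      add_sub_cancel_right]
  · have hval : (j - 1 - s).val = (j - s).val - 1 := by
      rw [sub_right_comm, ← Nat.cast_one, ZMod.val_sub_natCast_of_le _ (by omega)]
    rw [if_neg hodd, if_pos (by rw [hval, Nat.odd_iff]; rw [Nat.odd_iff] at hodd; omega),
      sub_add_cancel]

lemma pairFrom_not_mem_arc (hb : Odd b) {n : ℕ} (hn : Odd n) {s j : ZMod b}
    (hj : j ∉ arc s n) : pairFrom s j ∉ arc s n := by
  have : NeZero b := ⟨hb.pos.ne'⟩
  rw [mem_arc, not_lt] at hj ⊢
  rw [Nat.odd_iff] at hb hn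
  unfold pairFrom
  split_ifs with hodd
  · have := (j - s).val_lt; rw [Nat.odd_iff] at hodd
    rw [add_sub_right_comm, ZMod.val_add_one_of_lt _ (by omega)]; omega
  · rw [Nat.not_odd_iff] at hodd
    rw [sub_right_comm, ← Nat.cast_one, ZMod.val_sub_natCast_of_le _ (by omega)]; omega

end Arc

section Construction

variable {a b : ℕ}

def blockStart (i : ℕ) : ℕ := 3 * i / 2

def blockLen (i : ℕ) : ℕ := i % 2 + 1

lemma blockStart_succ (i : ℕ) : blockStart (i + 1) = blockStart i + blockLen i := by
  unfold blockStart blockLen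
  obtain ⟨k, rfl | rfl⟩ := Nat.even_or_odd' i <;> omega

def block (b i : ℕ) : Set (ZMod b) := arc (blockStart i : ZMod b) (blockLen i)

lemma disjoint_block_succ (hb : 3 ≤ b) (i : ℕ) : Disjoint (block b i) (block b (i + 1)) := by
  rw [block, block, blockStart_succ, Nat.cast_add]
  exact disjoint_arc_arc _ (by unfold blockLen; omega)

def rowStart (i : ℕ) : ℕ := if i = 0 then 0 else blockStart (i - 1)

def holeLen (a i : ℕ) : ℕ :=
  (if i = 0 then 0 else blockLen (i - 1)) + (if i + 1 < a then blockLen i else 0)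

lemma holeLen_odd (ha : Even a) {i : ℕ} (hi : i < a) : Odd (holeLen a i) := by
  obtain ⟨k, rfl⟩ := ha
  rw [Nat.odd_iff]
  unfold holeLen blockLen
  split_ifs <;> omega

lemma holeLen_le_three (a i : ℕ) : holeLen a i ≤ 3 := by
  unfold holeLen blockLen
  split_ifs <;> omega

lemma vertical_iff_mem_arc [NeZero b] (i : ℕ) (j : ZMod b) :
    ((i + 1 < a ∧ j ∈ block b i) ∨ (i ≠ 0 ∧ j ∈ block b (i - 1))) ↔
      j ∈ arc (rowStart i : ZMod b) (holeLen a i) := by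
  cases i with
  | zero =>
    by_cases ha : 1 < a <;> simp [ha, block, rowStart, holeLen, blockStart, blockLen, mem_arc]
  | succ k =>
    simp only [block, rowStart, holeLen, blockStart_succ k, Nat.add_sub_cancel, Nat.cast_add,
      Nat.add_one_ne_zero, ne_eq, not_false_eq_true, true_and, if_false]
    split_ifs with ha
    · rw [← arc_union_arc, Set.mem_union]
      simp only [ha, true_and, or_comm]
    · simp [ha]

open Classical in
/-- The matching of the tiling: the cells of `block b i` in rows `i` and `i + 1` are covered by
vertical dominoes, and the rest of each row, an arc of even length, by horizontal dominoes
paired from its start. -/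
noncomputable def cellPartner (a b : ℕ) (x : Fin a × ZMod b) : Fin a × ZMod b :=
  if h : (x.1 : ℕ) + 1 < a ∧ x.2 ∈ block b x.1 then (⟨x.1 + 1, h.1⟩, x.2)
  else if h : (x.1 : ℕ) ≠ 0 ∧ x.2 ∈ block b (x.1 - 1) then (⟨x.1 - 1, by omega⟩, x.2)
  else (x.1, pairFrom (rowStart x.1 : ZMod b) x.2)

lemma cylAdj_cellPartner (x : Fin a × ZMod b) : cylAdj a b x (cellPartner a b x) := by
  unfold cellPartner
  split_ifs with hdown hup
  · exact Or.inl ⟨rfl, Or.inl rfl⟩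
  · exact Or.inl ⟨rfl, Or.inr (by simp only; omega)⟩
  · unfold pairFrom
    split_ifs
    · exact Or.inr ⟨rfl, Or.inl rfl⟩
    · exact Or.inr ⟨rfl, Or.inr (sub_add_cancel _ _).symm⟩

lemma cellPartner_of_mem_block {i : Fin a} {j : ZMod b} (hi : (i : ℕ) + 1 < a)
    (hj : j ∈ block b i) : cellPartner a b (i, j) = (⟨i + 1, hi⟩, j) := by
  unfold cellPartner
  rw [dif_pos ⟨hi, hj⟩]

lemma cellPartner_of_not_mem_arc [NeZero b] {i : Fin a} {j : ZMod b}
    (hj : j ∉ arc (rowStart i : ZMod b) (holeLen a i)) :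
    cellPartner a b (i, j) = (i, pairFrom (rowStart i : ZMod b) j) := by
  rw [← vertical_iff_mem_arc, not_or] at hj
  unfold cellPartner
  rw [dif_neg hj.1, dif_neg hj.2]

lemma cellPartner_involutive (ha : Even a) (hb : Odd b) (hb3 : 3 ≤ b) :
    Function.Involutive (cellPartner a b) := by
  have : NeZero b := ⟨hb.pos.ne'⟩
  rintro ⟨i, j⟩
  by_cases hdown : (i : ℕ) + 1 < a ∧ j ∈ block b i
  · have hnext : ¬ ((i : ℕ) + 1 + 1 < a ∧ j ∈ block b (i + 1)) :=
      fun h => Set.disjoint_left.mp (disjoint_block_succ hb3 i) hdown.2 h.2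
    rw [cellPartner_of_mem_block hdown.1 hdown.2]
    unfold cellPartner
    rw [dif_neg hnext, dif_pos ⟨Nat.add_one_ne_zero _, hdown.2⟩]
    rfl
  by_cases hup : (i : ℕ) ≠ 0 ∧ j ∈ block b (i - 1)
  · have hprev : cellPartner a b (i, j) = (⟨i - 1, by omega⟩, j) := by
      unfold cellPartner
      rw [dif_neg hdown, dif_pos hup]
    rw [hprev, cellPartner_of_mem_block (by simp only; omega) hup.2]
    ext <;> simp only; omega
  have hj : j ∉ arc (rowStart i : ZMod b) (holeLen a i) := by
    rw [← vertical_iff_mem_arc]; tauto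
  have hjs : j ≠ rowStart i := by
    rintro rfl
    exact hj (by rw [mem_arc, sub_self, ZMod.val_zero]; exact (holeLen_odd ha i.isLt).pos)
  rw [cellPartner_of_not_mem_arc hj,
    cellPartner_of_not_mem_arc (pairFrom_not_mem_arc hb (holeLen_odd ha i.isLt) hj),
    pairFrom_pairFrom hb hjs]

lemma exists_cellPartner_eq_add_one (ha8 : 8 ≤ a) (hb : Odd b) (hb5 : 5 ≤ b) (j : ZMod b) :
    ∃ r : Fin a, cellPartner a b (r, j) = (r, j + 1) := by
  have : NeZero b := ⟨hb.pos.ne'⟩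
  suffices h : ∃ r < a, (r = 0 ∨ 3 ≤ (j - rowStart r).val) ∧ Odd (j - rowStart r).val by
    obtain ⟨r, hr, hle, hodd⟩ := h
    have hhole : holeLen a r ≤ (j - rowStart r).val := by
      rcases hle with rfl | hle
      · have := hodd.pos
        unfold holeLen blockLen
        split_ifs <;> omega
      · exact (holeLen_le_three a r).trans hle
    refine ⟨⟨r, hr⟩, ?_⟩
    rw [cellPartner_of_not_mem_arc (by rwa [mem_arc, not_lt]), pairFrom, if_pos hodd]
  have hjb := j.val_lt
  rw [Nat.odd_iff] at hb
  simp only [Nat.odd_iff]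
  by_cases hjo : j.val % 2 = 1
  · refine ⟨0, by omega, Or.inl rfl, ?_⟩
    rwa [rowStart, if_pos rfl, Nat.cast_zero, sub_zero]
  by_cases hj4 : 4 ≤ j.val
  · refine ⟨2, by omega, Or.inr ?_, ?_⟩ <;>
    · rw [show rowStart 2 = 1 from rfl, ZMod.val_sub_natCast_of_le _ (by omega)]; omega
  have hj : j.val = 0 ∨ j.val = 2 := by omega
  rcases (show b = 5 ∨ 7 ≤ b by omega) with rfl | hb7
  · rw [← ZMod.natCast_zmod_val j]
    rcases hj with h | h <;> rw [h]
    · exact ⟨6, by omega, by decide⟩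
    · exact ⟨7, by omega, by decide⟩
  · refine ⟨4 + j.val / 2, by omega, Or.inr ?_, ?_⟩ <;>
    · rw [show rowStart (4 + j.val / 2) = 4 + j.val by rcases hj with h | h <;> rw [h] <;> rfl,
        ZMod.val_sub_natCast_of_lt _ (by omega) (by omega)]
      omega

theorem cylFaultFreeTileable_of_even_of_odd (ha : Even a) (ha8 : 8 ≤ a) (hb : Odd b)
    (hb5 : 5 ≤ b) : cylFaultFreeTileable a b := by
  refine ⟨_, cylIsTiling_range_of_involutive (cellPartner_involutive ha hb (by omega))
    cylAdj_cellPartner, fun i hi => ?_, fun j => ?_⟩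
  · have hstart : (blockStart i : ZMod b) ∈ block b i := by
      have : NeZero b := ⟨hb.pos.ne'⟩
      rw [block, mem_arc, sub_self, ZMod.val_zero]; exact Nat.succ_pos _
    have hdown := cellPartner_of_mem_block (i := ⟨i, by omega⟩) hi hstart
    exact ⟨_, _, ⟨_, rfl⟩, by rw [hdown], rfl, by rw [hdown]⟩
  · obtain ⟨r, hr⟩ := exists_cellPartner_eq_add_one ha8 hb hb5 j
    exact ⟨r, (r, j), congrArg (s((r, j), ·)) hr⟩

end Construction

/-- For all natural numbers `n` and `m`, the cylindrical board
`(8 + 2 * n)′ × (5 + 2 * m)` admits a fault-free domino tiling. -/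
theorem cyl_faultFree_8'5 :
    ∀ n m : ℕ, cylFaultFreeTileable (8 + 2 * n) (5 + 2 * m) := fun n m =>
  cylFaultFreeTileable_of_even_of_odd ⟨4 + n, by ring⟩ (by omega) ⟨2 + m, by ring⟩ (by omega)
end

section
/- For every natural number n, the cylindrical board 4′×(5+2n) does not admit a fault-free domino tiling. -/
/-!
A tiling is encoded by its partner map `m`, a fixed-point-free involution of the cells. For
every set `S` of cells, `#S` has the parity of the number of cells of `S` whose partner lies
outside `S`. For a column this says that the numbers `c j = crossings m j` of dominoes crossing
two consecutive vertical fault-lines have the same parity. For the even rows (`2b` cells), whose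
leaving cells are the even-row cells of the vertical dominoes, it gives `4 ∣ #vertical cells`,
so that the count `4b = #vertical cells + 2 ∑ c j` makes `∑ c j` even. As `b` is odd, every
`c j` is even, hence at least `2` in a fault-free tiling; then `∑ c j ≥ 2b` leaves no cell for a
vertical domino, although one must cross the first horizontal fault-line.
-/

open Finset Function

namespace Function.Involutive

variable {α : Type*} [Fintype α] {m : α → α}

theorem card_filter_and_comp_comm (hm : Involutive m) (p q : α → Prop) [DecidablePred p]
    [DecidablePred q] : #{x | p x ∧ q (m x)} = #{x | q x ∧ p (m x)} :=
  card_nbij' m m (fun x hx => by simpa [hm x, and_comm] using hx)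
    (fun x hx => by simpa [hm x, and_comm] using hx) (fun x _ => hm x) (fun x _ => hm x)

theorem even_card_filter_and_comp (hm : Involutive m) (hfix : ∀ x, m x ≠ x) (p : α → Prop)
    [DecidablePred p] : Even #{x | p x ∧ p (m x)} := by
  classical
  set m' : α → α := fun x => if p x ∧ p (m x) then m x else x
  have hm' : Involutive m' := by
    intro x
    by_cases hx : p x ∧ p (m x)
    · simp [m', hx, hm x]
    · simp [m', hx]
  have hsupport : (Involutive.toPerm m' hm').support = ({x | p x ∧ p (m x)} : Finset α) := by
    ext x
    by_cases hx : p x ∧ p (m x) <;> simp [m', hx, hfix x]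
  rw [← hsupport, even_iff_two_dvd]
  exact Equiv.Perm.two_dvd_card_support (by ext x; simp [sq, hm' x])

theorem even_card_filter_and_not_comp_iff (hm : Involutive m) (hfix : ∀ x, m x ≠ x)
    (p : α → Prop) [DecidablePred p] : Even #{x | p x ∧ ¬p (m x)} ↔ Even #{x | p x} := by
  rw [← card_filter_add_card_filter_not (s := {x | p x}) (fun x => p (m x)), filter_filter,
    filter_filter, Nat.even_add]
  simp [hm.even_card_filter_and_comp hfix p]

theorem card_filter_not_iff_comp (hm : Involutive m) (p : α → Prop) [DecidablePred p] :
    #{x | ¬(p x ↔ p (m x))} = 2 * #{x | p x ∧ ¬p (m x)} := by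
  rw [← card_filter_add_card_filter_not (s := {x | ¬(p x ↔ p (m x))}) p, filter_filter,
    filter_filter, two_mul]
  congr 1
  · congr 1; ext x; simp only [mem_filter, mem_univ, true_and]; tauto
  · rw [hm.card_filter_and_comp_comm p (fun x => ¬p x)]
    congr 1; ext x; simp only [mem_filter, mem_univ, true_and]; tauto

end Function.Involutive

theorem Finset.card_filter_snd_eq {α β : Type*} [Fintype α] [Fintype β] [DecidableEq β]
    (j : β) : #{x : α × β | x.2 = j} = Fintype.card α := by
  rw [show ({x | x.2 = j} : Finset (α × β)) = univ ×ˢ {j} by ext ⟨i, k⟩; simp [eq_comm]]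
  simp

theorem one_ne_zero_of_two_ne_zero {R : Type*} [AddMonoidWithOne R] (h2 : (2 : R) ≠ 0) :
    (1 : R) ≠ 0 :=
  fun h1 => h2 (by rw [← one_add_one_eq_two, h1, add_zero])

theorem ZMod.even_of_even_add_of_even_sum {b : ℕ} [NeZero b] (hb : Odd b) {f : ZMod b → ℕ}
    (hf : ∀ j, Even (f j + f (j + 1))) (hsum : Even (∑ j, f j)) (j : ZMod b) : Even (f j) := by
  have hnat (k : ℕ) : Even (f k) ↔ Even (f 0) := by
    induction k with
    | zero => simp
    | succ k ih => rw [Nat.cast_succ, ← ih]; exact (Nat.even_add.mp (hf k)).symm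
  have hall (j : ZMod b) : Even (f j) ↔ Even (f 0) := by simpa using hnat j.val
  rw [hall]
  by_contra h0
  have hodd (j : ZMod b) : Odd (f j) := Nat.not_even_iff_odd.mp ((hall j).not.mpr h0)
  rw [even_sum_iff_even_card_odd, filter_true_of_mem (fun j _ => hodd j), card_univ,
    ZMod.card] at hsum
  exact Nat.not_even_iff_odd.mpr hb hsum

section Cylinder

variable {a b : ℕ}

theorem cylAdj_comm {c d : Fin a × ZMod b} : cylAdj a b c d ↔ cylAdj a b d c := by
  unfold cylAdj
  constructor <;> intro h <;> rcases h with ⟨h, h' | h'⟩ | ⟨h, h' | h'⟩ <;> simp [h, h']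

theorem cylAdj.ne (h1 : (1 : ZMod b) ≠ 0) {c d : Fin a × ZMod b} (h : cylAdj a b c d) :
    c ≠ d := by
  rintro rfl
  rcases h with ⟨-, h | h⟩ | ⟨-, h | h⟩
  · omega
  · omega
  all_goals exact h1 (by simpa using h)

theorem cylAdj.snd_eq_add_one_or_sub_one {c d : Fin a × ZMod b} (h : cylAdj a b c d)
    (hne : d.2 ≠ c.2) : d.2 = c.2 + 1 ∨ d.2 = c.2 - 1 := by
  rcases h with ⟨h, -⟩ | ⟨-, h | h⟩
  · exact absurd h.symm hne
  · exact Or.inl h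
  · exact Or.inr (eq_sub_of_add_eq h.symm)

theorem cylAdj.snd_eq_iff (h1 : (1 : ZMod b) ≠ 0) {c d : Fin a × ZMod b} (h : cylAdj a b c d) :
    d.2 = c.2 ↔ ¬(Even (c.1 : ℕ) ↔ Even (d.1 : ℕ)) := by
  rcases h with ⟨hcol, hrow⟩ | ⟨hrow, hcol⟩
  · rcases hrow with h | h <;> simp only [hcol, ← h, Nat.even_add_one, true_iff] <;> tauto
  · have hne : d.2 ≠ c.2 := by
      rcases hcol with h | h <;> rw [h] <;> simpa [eq_comm (a := d.2)] using h1
    simp [hrow, hne]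

theorem cylIsTiling.exists_partner {T : Set (Sym2 (Fin a × ZMod b))} (hT : cylIsTiling a b T) :
    ∃ m : Fin a × ZMod b → Fin a × ZMod b,
      Involutive m ∧ (∀ x, cylAdj a b x (m x)) ∧ ∀ x y, s(x, y) ∈ T → m x = y := by
  have hex (x : Fin a × ZMod b) : ∃ y, s(x, y) ∈ T := by
    obtain ⟨p, ⟨hp, hx⟩, -⟩ := hT.2 x
    exact ⟨Sym2.Mem.other hx, by rwa [Sym2.other_spec]⟩
  choose m hm using hex
  have hpartner (x y) (hxy : s(x, y) ∈ T) : m x = y :=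
    Sym2.congr_right.mp
      ((hT.2 x).unique ⟨hm x, Sym2.mem_mk_left _ _⟩ ⟨hxy, Sym2.mem_mk_left _ _⟩)
  refine ⟨m, fun x => hpartner _ _ (Sym2.eq_swap ▸ hm x), fun x => ?_, hpartner⟩
  obtain ⟨c, d, hcd, he⟩ := hT.1 _ (hm x)
  rcases Sym2.eq_iff.mp he with ⟨rfl, hd⟩ | ⟨rfl, hc⟩
  · rwa [hd]
  · rw [hc]
    exact cylAdj_comm.mp hcd

variable [NeZero b] {m : Fin a × ZMod b → Fin a × ZMod b}

def crossings (m : Fin a × ZMod b → Fin a × ZMod b) (j : ZMod b) : ℕ :=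
  #{x | x.2 = j ∧ (m x).2 = j + 1}

variable (hm : Involutive m) (hadj : ∀ x, cylAdj a b x (m x))
include hm hadj

theorem card_filter_snd_eq_and_apply_snd_ne (h2 : (2 : ZMod b) ≠ 0) (j : ZMod b) :
    #{x | x.2 = j ∧ (m x).2 ≠ j} = crossings m (j - 1) + crossings m j := by
  have h1 := one_ne_zero_of_two_ne_zero h2
  have hsplit : ({x | x.2 = j ∧ (m x).2 ≠ j} : Finset (Fin a × ZMod b)) =
      ({x | x.2 = j ∧ (m x).2 = j - 1} : Finset _) ∪
        ({x | x.2 = j ∧ (m x).2 = j + 1} : Finset _) := by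
    ext x
    simp only [mem_filter, mem_univ, true_and, mem_union]
    constructor
    · rintro ⟨rfl, hne⟩
      rcases (hadj x).snd_eq_add_one_or_sub_one hne with h | h <;> simp [h]
    · rintro (⟨rfl, h⟩ | ⟨rfl, h⟩) <;> refine ⟨rfl, ?_⟩ <;> rw [h] <;> simpa using h1
  have hdisj : Disjoint ({x | x.2 = j ∧ (m x).2 = j - 1} : Finset (Fin a × ZMod b))
      ({x | x.2 = j ∧ (m x).2 = j + 1} : Finset _) :=
    disjoint_filter.mpr fun x _ h h' => h2 (by linear_combination -(h.2.symm.trans h'.2))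
  rw [hsplit, card_union_of_disjoint hdisj, crossings, crossings, sub_add_cancel,
    hm.card_filter_and_comp_comm (fun x => x.2 = j) (fun y => y.2 = j - 1)]

theorem even_crossings_sub_one_add_iff (h2 : (2 : ZMod b) ≠ 0) (j : ZMod b) :
    Even (crossings m (j - 1) + crossings m j) ↔ Even a := by
  have hfix x : m x ≠ x := ((hadj x).ne (one_ne_zero_of_two_ne_zero h2)).symm
  rw [← card_filter_snd_eq_and_apply_snd_ne hm hadj h2,
    hm.even_card_filter_and_not_comp_iff hfix (fun x => x.2 = j), card_filter_snd_eq,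
    Fintype.card_fin]

theorem mul_eq_card_filter_apply_snd_eq_add (h2 : (2 : ZMod b) ≠ 0) :
    a * b = #{x | (m x).2 = x.2} + 2 * ∑ j, crossings m j := by
  have hcol j : #{x : Fin a × ZMod b | x.2 = j} =
      #{x | x.2 = j ∧ (m x).2 = j} + (crossings m (j - 1) + crossings m j) := by
    rw [← card_filter_snd_eq_and_apply_snd_ne hm hadj h2,
      ← card_filter_add_card_filter_not (s := {x | x.2 = j}) (fun x => (m x).2 = j),
      filter_filter, filter_filter]
  have hvert : #{x | (m x).2 = x.2} = ∑ j, #{x : Fin a × ZMod b | x.2 = j ∧ (m x).2 = j} := by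
    rw [card_eq_sum_card_fiberwise (f := Prod.snd) (t := univ) (fun _ _ => mem_univ _)]
    refine sum_congr rfl fun j _ => congrArg card ?_
    ext x
    simp only [mem_filter, mem_univ, true_and]
    constructor
    · rintro ⟨h, rfl⟩; exact ⟨rfl, h⟩
    · rintro ⟨rfl, h⟩; exact ⟨h, rfl⟩
  calc a * b = ∑ j, #{x : Fin a × ZMod b | x.2 = j} := by simp [card_filter_snd_eq, mul_comm]
    _ = #{x | (m x).2 = x.2} + 2 * ∑ j, crossings m j := by
      rw [hvert, two_mul]
      nth_rw 1 [← (Equiv.subRight (1 : ZMod b)).sum_comp (crossings m)]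
      simp_rw [hcol, sum_add_distrib]
      rfl

theorem card_filter_apply_snd_eq (h1 : (1 : ZMod b) ≠ 0) :
    #{x | (m x).2 = x.2} = 2 * #{x | Even (x.1 : ℕ) ∧ ¬Even ((m x).1 : ℕ)} := by
  rw [← hm.card_filter_not_iff_comp (fun x => Even (x.1 : ℕ))]
  exact congrArg card (filter_congr fun x _ => (hadj x).snd_eq_iff h1)

end Cylinder

theorem even_sum_crossings_of_four_rows {b : ℕ} [NeZero b]
    {m : Fin 4 × ZMod b → Fin 4 × ZMod b} (hm : Involutive m) (hadj : ∀ x, cylAdj 4 b x (m x))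
    (h2 : (2 : ZMod b) ≠ 0) :
    Even (∑ j, crossings m j) := by
  have h1 := one_ne_zero_of_two_ne_zero h2
  have hrows : #{x : Fin 4 × ZMod b | Even (x.1 : ℕ)} = 2 * b := by
    rw [show ({x | Even (x.1 : ℕ)} : Finset (Fin 4 × ZMod b)) =
        ({i | Even (i : ℕ)} : Finset (Fin 4)) ×ˢ univ by ext; simp,
      card_product, card_univ, ZMod.card]
    rfl
  obtain ⟨k, hk⟩ : Even #{x | Even (x.1 : ℕ) ∧ ¬Even ((m x).1 : ℕ)} := by
    rw [hm.even_card_filter_and_not_comp_iff (fun x => ((hadj x).ne h1).symm), hrows]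
    exact even_two_mul b
  have hcount := mul_eq_card_filter_apply_snd_eq_add hm hadj h2
  rw [card_filter_apply_snd_eq hm hadj h1, hk] at hcount
  exact ⟨b - k, by omega⟩

/-- For every natural number `n`, the cylindrical board `(4)′ × (5 + 2 * n)`
does not admit a fault-free domino tiling. -/
theorem cyl_not_faultFree_4'52n :
    ∀ n : ℕ, ¬ cylFaultFreeTileable (4) (5 + 2 * n) := by
  rintro n ⟨T, hT, hrow, hcol⟩
  have h2 : (2 : ZMod (5 + 2 * n)) ≠ 0 := by
    exact_mod_cast (ZMod.natCast_eq_zero_iff 2 _).not.mpr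
      (Nat.not_dvd_of_pos_of_lt two_pos (by omega))
  obtain ⟨m, hm, hadj, hpartner⟩ := hT.exists_partner
  have hpos j : 1 ≤ crossings m j := by
    obtain ⟨i, hi⟩ := hcol j
    exact card_pos.mpr ⟨(i, j), by simp [hpartner _ _ hi]⟩
  have heven := ZMod.even_of_even_add_of_even_sum ⟨n + 2, by ring⟩
    (fun j => by simpa using (even_crossings_sub_one_add_iff hm hadj h2 (j + 1)).mpr (by decide))
    (even_sum_crossings_of_four_rows hm hadj h2)
  have hsum : 2 * (5 + 2 * n) ≤ ∑ j, crossings m j :=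
    calc 2 * (5 + 2 * n) = ∑ _j : ZMod (5 + 2 * n), 2 := by simp [mul_comm]
      _ ≤ ∑ j, crossings m j := sum_le_sum fun j _ => by
        obtain ⟨k, hk⟩ := heven j
        have := hpos j
        omega
  have hvert : 1 ≤ #{x | (m x).2 = x.2} := by
    obtain ⟨c, d, hcd, hsame, -, -⟩ := hrow 0 (by norm_num)
    exact card_pos.mpr ⟨c, by simp [hpartner _ _ hcd, hsame]⟩
  have := mul_eq_card_filter_apply_snd_eq_add hm hadj h2
  omega
end
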